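/- Let A be a Boolean algebra, κ an infinite index set, (V_n)_{n∈ω} a sequence of pairwise distinct ultrafilters on A, and (a_n)_{n∈ω} positive reals with Σ_n a_n = 1. Let φ : A → M_κ be a Boolean homomorphism whose induced measure is purely atomic with these data, i.e. λ_κ(φ(a)) = Σ_{n : a ∈ V_n} a_n for every a ∈ A. For each n let p_n = inf{φ(v) : v ∈ V_n}, the infimum taken in the complete Boolean algebra M_κ. Then the p_n are pairwise disjoint, λ_κ(p_n) ≥ a_n for every n, and sup_n p_n = ⊤ (so (p_n) is a maximal antichain in M_κ). -/

import Mathlib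

open MeasureTheory Set Filter Topology
open scoped symmDiff ENNReal

noncomputable section

universe u v

attribute [local instance] Classical.propDecidable

/-- The two-element set `{0,1}`, as an additive group (addition mod 2) with the
discrete topology. -/
inductive Two : Type
  | zero
  | one
  deriving DecidableEq

instance : Fintype Two := ⟨{Two.zero, Two.one}, fun x => by cases x <;> simp⟩

instance : Zero Two := ⟨Two.zero⟩
instance : One Two := ⟨Two.one⟩

/-- Addition modulo 2 on `{0,1}`. -/
def Two.add : Two → Two → Two
  | Two.zero, x => x
  | Two.one, Two.zero => Two.one
  | Two.one, Two.one => Two.zero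

instance : Add Two := ⟨Two.add⟩
instance : Neg Two := ⟨fun x => x⟩

instance : AddCommGroup Two where
  add := (· + ·)
  zero := Two.zero
  neg := (- ·)
  add_assoc := by decide
  zero_add := by decide
  add_zero := by decide
  neg_add_cancel := by decide
  add_comm := by decide
  nsmul := nsmulRec
  zsmul := zsmulRec

instance : TopologicalSpace Two := ⊥
instance : DiscreteTopology Two := ⟨rfl⟩

instance : IsTopologicalAddGroup Two where
  continuous_add := continuous_of_discreteTopology
  continuous_neg := continuous_of_discreteTopology

/-- The Cantor cube `{0,1}^κ`, with the product topology. -/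
abbrev Cube (κ : Type u) : Type u := κ → Two

instance (κ : Type u) : MeasurableSpace (Cube κ) := borel _

instance (κ : Type u) : BorelSpace (Cube κ) := ⟨rfl⟩

/-- The fair-coin product measure `λ_κ` on `{0,1}^κ`: the Haar measure of the compact
group `{0,1}^κ`, normalized so that the whole space has measure `1`. -/
def lam (κ : Type u) : Measure (Cube κ) :=
  Measure.addHaarMeasure ⟨⟨Set.univ, isCompact_univ⟩, by simpa using Set.univ_nonempty⟩

/-- The Boolean algebra of measurable subsets of `X`. -/
abbrev MSet (X : Type u) [MeasurableSpace X] : Type u := {s : Set X // MeasurableSet s}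

/-- The ideal of `μ`-null sets in the Boolean ring of measurable subsets of `X`. -/
def nullIdeal {X : Type u} [MeasurableSpace X] (μ : Measure X) :
    Ideal (AsBoolRing (MSet X)) where
  carrier := {s | μ (ofBoolRing s : MSet X).1 = 0}
  zero_mem' := by
    show μ (ofBoolRing (0 : AsBoolRing (MSet X)) : MSet X).1 = 0
    rw [ofBoolRing_zero]
    simpa using measure_empty (μ := μ)
  add_mem' := by
    intro a b ha hb
    show μ (ofBoolRing (a + b) : MSet X).1 = 0
    rw [ofBoolRing_add]
    refine le_antisymm ?_ (by simp)
    calc μ ((ofBoolRing a ∆ ofBoolRing b : MSet X) : Set X)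
        ≤ μ (((ofBoolRing a : MSet X) : Set X) ∪ ((ofBoolRing b : MSet X) : Set X)) := by
          refine measure_mono ?_
          simp only [symmDiff_def, MeasurableSet.sup_eq_union, MeasurableSet.coe_union,
            MeasurableSet.coe_sdiff]
          exact Set.union_subset_union Set.diff_subset Set.diff_subset
      _ ≤ μ ((ofBoolRing a : MSet X) : Set X) + μ ((ofBoolRing b : MSet X) : Set X) :=
          measure_union_le _ _
      _ = 0 := by rw [ha, hb, add_zero]
  smul_mem' := by
    intro c x hx
    show μ (ofBoolRing (c * x) : MSet X).1 = 0
    rw [ofBoolRing_mul]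
    refine le_antisymm ?_ (by simp)
    calc μ ((ofBoolRing c ⊓ ofBoolRing x : MSet X) : Set X)
        ≤ μ ((ofBoolRing x : MSet X) : Set X) := by
          refine measure_mono ?_
          simp only [MeasurableSet.inf_eq_inter, MeasurableSet.coe_inter]
          exact Set.inter_subset_right
      _ = 0 := hx

instance {X : Type u} [MeasurableSpace X] (μ : Measure X) :
    BooleanRing (AsBoolRing (MSet X) ⧸ nullIdeal μ) where
  isIdempotentElem a := by
    obtain ⟨x, rfl⟩ := Ideal.Quotient.mk_surjective a
    rw [IsIdempotentElem, ← map_mul]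
    exact congrArg _ (BooleanRing.mul_self x)

/-- The measure algebra of the measure `μ`: measurable sets modulo `μ`-null sets,
as a Boolean algebra.  For `μ = lam κ` this is the measure algebra `M_κ`. -/
abbrev MAlg (X : Type u) [MeasurableSpace X] (μ : Measure X) : Type u :=
  AsBoolAlg (AsBoolRing (MSet X) ⧸ nullIdeal μ)

/-- The class of a measurable set in the measure algebra. -/
def MAlg.mk {X : Type u} [MeasurableSpace X] (μ : Measure X) (s : MSet X) : MAlg X μ :=
  toBoolAlg (Ideal.Quotient.mk (nullIdeal μ) (toBoolRing s))

/-- The measure induced by `μ` on its measure algebra `MAlg X μ` (with real values). -/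
def mval {X : Type u} [MeasurableSpace X] (μ : Measure X) (a : MAlg X μ) : ℝ :=
  Quotient.liftOn' (ofBoolAlg a) (fun s => (μ (ofBoolRing s : MSet X).1).toReal)
    (by
      intro s t h
      have hst : s - t ∈ nullIdeal μ := by
        rwa [Submodule.quotientRel_def] at h
      have h0 : μ (((ofBoolRing s : MSet X) : Set X) ∆ ((ofBoolRing t : MSet X) : Set X)) = 0 := by
        have hn : μ ((ofBoolRing (s - t) : MSet X) : Set X) = 0 := hst
        rw [ofBoolRing_sub] at hn
        simpa only [symmDiff_def, MeasurableSet.sup_eq_union, MeasurableSet.coe_union,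
          MeasurableSet.coe_sdiff, Set.sup_eq_union] using hn
      have hc := measure_congr (μ := μ) (MeasureTheory.measure_symmDiff_eq_zero_iff.mp h0)
      simp only [hc])

/-- An ultrafilter on a Boolean algebra, as a set of elements: a maximal proper filter. -/
def IsUltrafilterOn {A : Type v} [BooleanAlgebra A] (U : Set A) : Prop :=
  ⊥ ∉ U ∧ (∀ a ∈ U, ∀ b ∈ U, a ⊓ b ∈ U) ∧ (∀ a ∈ U, ∀ b, a ≤ b → b ∈ U) ∧
    ∀ a, a ∈ U ∨ aᶜ ∈ U

/-!
The infimum `p_n` of the downward directed set `φ[V_n]` is approached by a decreasing sequence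
in `φ[V_n]`, and in the measure algebra the intersection of representatives of a decreasing
sequence is a lower bound whose measure is the limit of the measures. Hence
`λ_κ(p_n) = inf_{v ∈ V_n} λ_κ(φ v) ≥ a_n`. Two distinct ultrafilters are separated by some
`x ∈ V_m` with `xᶜ ∈ V_n`, so `p_m ≤ φ x` and `p_n ≤ (φ x)ᶜ` are disjoint. Finally an upper
bound `b` of all `p_n` has measure at least `Σ a_n = 1`, hence `b = ⊤`.
-/

theorem DirectedOn.exists_antitone_le {α : Type*} [Preorder α] {S : Set α}
    (hS : DirectedOn (· ≥ ·) S) (s : ℕ → α) (hs : ∀ k, s k ∈ S) :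
    ∃ u : ℕ → α, Antitone u ∧ (∀ k, u k ∈ S) ∧ ∀ k, u k ≤ s k := by
  choose g hgS hgx hgy using hS
  let v : ℕ → S := fun k =>
    Nat.rec ⟨s 0, hs 0⟩ (fun k x => ⟨g x x.2 (s (k + 1)) (hs _), hgS _ _ _ _⟩) k
  refine ⟨fun k => (v k).1, antitone_nat_of_succ_le fun k => hgx _ _ _ _, fun k => (v k).2,
    fun k => ?_⟩
  cases k with
  | zero => exact le_rfl
  | succ k => exact hgy _ _ _ _

theorem le_tsum_ite {ι : Type*} {f : ι → ℝ} (hf : ∀ i, 0 ≤ f i) (hs : Summable f)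
    {P : ι → Prop} [DecidablePred P] {i : ι} (hi : P i) :
    f i ≤ ∑' j, if P j then f j else 0 := by
  have hterm_nonneg : ∀ j, 0 ≤ if P j then f j else 0 := fun j => ite_nonneg (hf j) le_rfl
  have hterm_le : ∀ j, (if P j then f j else 0) ≤ f j := fun j => by
    split_ifs
    exacts [le_rfl, hf j]
  simpa [hi] using (hs.of_nonneg_of_le hterm_nonneg hterm_le).le_tsum i fun j _ => hterm_nonneg j

namespace IsUltrafilterOn

variable {A : Type*} [BooleanAlgebra A] {U W : Set A}

theorem nonempty (hU : IsUltrafilterOn U) : U.Nonempty := by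
  rcases hU.2.2.2 ⊥ with h | h
  exacts [⟨_, h⟩, ⟨_, h⟩]

theorem directedOn_image {B : Type*} [Preorder B] (hU : IsUltrafilterOn U) {f : A → B}
    (hf : Monotone f) : DirectedOn (· ≥ ·) (f '' U) :=
  _root_.directedOn_image.2 fun x hx y hy =>
    ⟨x ⊓ y, hU.2.1 x hx y hy, hf inf_le_left, hf inf_le_right⟩

theorem eq_of_subset (hU : IsUltrafilterOn U) (hW : IsUltrafilterOn W) (h : U ⊆ W) :
    U = W := by
  refine h.antisymm fun x hxW => ?_
  by_contra hxU
  have hxcW : xᶜ ∈ W := h ((hU.2.2.2 x).resolve_left hxU)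
  exact hW.1 ((inf_compl_eq_bot : x ⊓ xᶜ = ⊥) ▸ hW.2.1 x hxW _ hxcW)

theorem exists_mem_compl_mem (hU : IsUltrafilterOn U) (hW : IsUltrafilterOn W) (h : U ≠ W) :
    ∃ x ∈ U, xᶜ ∈ W := by
  by_contra! hUW
  refine h (hU.eq_of_subset hW fun x hxU => ?_)
  exact (hW.2.2.2 x).resolve_right (hUW x hxU)

theorem disjoint_of_mem_lowerBounds_image {B : Type*} [BooleanAlgebra B]
    (hU : IsUltrafilterOn U) (hW : IsUltrafilterOn W) (hUW : U ≠ W)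
    (f : BoundedLatticeHom A B) {p q : B} (hp : p ∈ lowerBounds (f '' U))
    (hq : q ∈ lowerBounds (f '' W)) : Disjoint p q := by
  obtain ⟨x, hxU, hxW⟩ := hU.exists_mem_compl_mem hW hUW
  have hpx : p ≤ f x := hp ⟨x, hxU, rfl⟩
  have hqx : q ≤ (f x)ᶜ := map_compl' f x ▸ hq ⟨xᶜ, hxW, rfl⟩
  exact disjoint_compl_right.mono hpx hqx

end IsUltrafilterOn

section MeasureAlgebra

variable {X : Type u} [MeasurableSpace X] {μ : Measure X}

/-- `MAlg.mk` as a homomorphism of Boolean algebras. -/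
def MAlg.mkHom (μ : Measure X) : BoundedLatticeHom (MSet X) (MAlg X μ) :=
  (Ideal.Quotient.mk (nullIdeal μ)).asBoolAlg.comp
    ((OrderIso.asBoolAlgAsBoolRing (MSet X)).symm : BoundedLatticeHom _ _)

theorem MAlg.mkHom_surjective (μ : Measure X) : Function.Surjective (MAlg.mkHom μ) := by
  intro x
  obtain ⟨y, hy⟩ := Ideal.Quotient.mk_surjective (ofBoolAlg x)
  exact ⟨ofBoolRing y, congrArg toBoolAlg hy⟩

theorem MAlg.mkHom_eq_bot {s : MSet X} : MAlg.mkHom μ s = ⊥ ↔ μ s.1 = 0 := by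
  change MAlg.mk μ s = ⊥ ↔ _
  rw [MAlg.mk, ← toBoolAlg_zero, toBoolAlg_inj, Ideal.Quotient.eq_zero_iff_mem]
  rfl

theorem MAlg.mkHom_le_mkHom {s t : MSet X} :
    MAlg.mkHom μ s ≤ MAlg.mkHom μ t ↔ μ (s.1 \ t.1) = 0 := by
  rw [← sdiff_eq_bot_iff, ← map_sdiff', MAlg.mkHom_eq_bot]
  rfl

theorem mval_mkHom (s : MSet X) : mval μ (MAlg.mkHom μ s) = (μ s.1).toReal := rfl

theorem mval_nonneg (x : MAlg X μ) : 0 ≤ mval μ x := by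
  obtain ⟨s, rfl⟩ := MAlg.mkHom_surjective μ x
  exact ENNReal.toReal_nonneg

theorem MAlg.exists_antitone_rep {u : ℕ → MAlg X μ} (hu : Antitone u) :
    ∃ R : ℕ → MSet X, Antitone (fun k => (R k).1) ∧ ∀ k, MAlg.mkHom μ (R k) = u k := by
  choose r hr using fun k => MAlg.mkHom_surjective μ (u k)
  refine ⟨fun k => ⟨⋂ j ∈ Set.Iic k, (r j).1,
      .biInter (Set.to_countable _) fun j _ => (r j).2⟩,
    fun k l hkl => Set.biInter_mono (Set.Iic_subset_Iic.2 hkl) fun _ _ => subset_rfl,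
    fun k => ?_⟩
  refine le_antisymm ?_ ?_
  · rw [← hr k]
    exact OrderHomClass.mono (MAlg.mkHom μ) (Set.biInter_subset_of_mem Set.self_mem_Iic)
  · rw [← hr k, MAlg.mkHom_le_mkHom]
    simp_rw [Set.sdiff_iInter]
    exact (measure_biUnion_null_iff (Set.to_countable _)).2 fun j hj =>
      MAlg.mkHom_le_mkHom.1 (hr k ▸ hr j ▸ hu hj)

variable [IsFiniteMeasure μ]

theorem mval_eq_zero {x : MAlg X μ} : mval μ x = 0 ↔ x = ⊥ := by
  obtain ⟨s, rfl⟩ := MAlg.mkHom_surjective μ x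
  rw [mval_mkHom, MAlg.mkHom_eq_bot, ENNReal.toReal_eq_zero_iff]
  simp [measure_ne_top]

theorem mval_mono {x y : MAlg X μ} (h : x ≤ y) : mval μ x ≤ mval μ y := by
  obtain ⟨s, rfl⟩ := MAlg.mkHom_surjective μ x
  obtain ⟨t, rfl⟩ := MAlg.mkHom_surjective μ y
  rw [MAlg.mkHom_le_mkHom] at h
  exact ENNReal.toReal_mono (measure_ne_top μ _) (measure_mono_ae (ae_le_set.2 h))

theorem mval_sup_of_disjoint {x y : MAlg X μ} (h : Disjoint x y) :
    mval μ (x ⊔ y) = mval μ x + mval μ y := by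
  obtain ⟨s, rfl⟩ := MAlg.mkHom_surjective μ x
  obtain ⟨t, rfl⟩ := MAlg.mkHom_surjective μ y
  rw [disjoint_iff, ← InfHomClass.map_inf, MAlg.mkHom_eq_bot] at h
  rw [← SupHomClass.map_sup, mval_mkHom, mval_mkHom, mval_mkHom, ← ENNReal.toReal_add
    (measure_ne_top μ _) (measure_ne_top μ _)]
  exact congrArg ENNReal.toReal (measure_union₀ t.2.nullMeasurableSet h)

theorem mval_sdiff (x y : MAlg X μ) : mval μ (x \ y) = mval μ x - mval μ (x ⊓ y) := by
  rw [eq_sub_iff_add_eq', ← mval_sup_of_disjoint disjoint_inf_sdiff, sup_inf_sdiff]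

theorem mval_finset_sup {ι : Type*} (s : Finset ι) {f : ι → MAlg X μ}
    (hf : (s : Set ι).PairwiseDisjoint f) : mval μ (s.sup f) = ∑ i ∈ s, mval μ (f i) := by
  classical
  induction s using Finset.induction_on with
  | empty => simpa using mval_eq_zero.2 rfl
  | insert i s hi ih =>
    rw [Finset.coe_insert] at hf
    rw [Finset.sup_insert, Finset.sum_insert hi, mval_sup_of_disjoint, ih (hf.subset (by simp))]
    exact Finset.disjoint_sup_right.2 fun j hj =>
      hf (by simp) (by simp [hj]) (ne_of_mem_of_not_mem hj hi).symm

theorem sum_mval_le_of_pairwiseDisjoint {ι : Type*} (s : Finset ι) {f : ι → MAlg X μ}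
    (hf : (s : Set ι).PairwiseDisjoint f) {b : MAlg X μ} (hb : ∀ i ∈ s, f i ≤ b) :
    ∑ i ∈ s, mval μ (f i) ≤ mval μ b :=
  mval_finset_sup s hf ▸ mval_mono (Finset.sup_le hb)

theorem MAlg.exists_le_tendsto_mval {u : ℕ → MAlg X μ} (hu : Antitone u) :
    ∃ t, (∀ k, t ≤ u k) ∧ Tendsto (fun k => mval μ (u k)) atTop (𝓝 (mval μ t)) := by
  obtain ⟨R, hR_anti, hR⟩ := MAlg.exists_antitone_rep hu
  refine ⟨MAlg.mkHom μ ⟨⋂ k, (R k).1, .iInter fun k => (R k).2⟩,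
    fun k => hR k ▸ OrderHomClass.mono (MAlg.mkHom μ) (Set.iInter_subset _ k), ?_⟩
  simp only [← hR, mval_mkHom]
  exact (ENNReal.tendsto_toReal (measure_ne_top μ _)).comp
    (tendsto_measure_iInter_atTop (fun k => (R k).2.nullMeasurableSet) hR_anti
      ⟨0, measure_ne_top μ _⟩)

theorem MAlg.isGLB_mval_image {S : Set (MAlg X μ)} (hne : S.Nonempty)
    (hS : DirectedOn (· ≥ ·) S) {p : MAlg X μ} (hp : IsGLB S p) :
    IsGLB (mval μ '' S) (mval μ p) := by
  obtain ⟨I, hI⟩ : ∃ I, IsGLB (mval μ '' S) I := ⟨_, isGLB_csInf (hne.image _)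
    ⟨0, Set.forall_mem_image.2 fun x _ => mval_nonneg x⟩⟩
  obtain ⟨w, -, -, hw, hwS⟩ := hI.exists_seq_antitone_tendsto (hne.image _)
  choose s hsS hsw using hwS
  obtain ⟨u, hu_anti, huS, hus⟩ := hS.exists_antitone_le s hsS
  have hI_le : ∀ x ∈ S, I ≤ mval μ x := fun x hx => hI.1 ⟨x, hx, rfl⟩
  have hu : Tendsto (fun k => mval μ (u k)) atTop (𝓝 I) :=
    tendsto_of_tendsto_of_tendsto_of_le_of_le tendsto_const_nhds hw
      (fun k => hI_le _ (huS k)) fun k => hsw k ▸ mval_mono (hus k)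
  obtain ⟨t, htu, ht⟩ := MAlg.exists_le_tendsto_mval hu_anti
  have ht_lb : t ∈ lowerBounds S := by
    intro v hv
    have h_sdiff : ∀ k, mval μ (t \ v) ≤ mval μ (u k) - I := by
      intro k
      obtain ⟨z, hzS, hzu, hzv⟩ := hS _ (huS k) v hv
      calc mval μ (t \ v) ≤ mval μ (u k \ v) := mval_mono (sdiff_le_sdiff_right (htu k))
        _ = mval μ (u k) - mval μ (u k ⊓ v) := mval_sdiff _ _
        _ ≤ mval μ (u k) - I := by
          gcongr
          exact (hI_le z hzS).trans (mval_mono (le_inf hzu hzv))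
    have h0 : mval μ (t \ v) ≤ 0 :=
      ge_of_tendsto' (by simpa using hu.sub_const I) h_sdiff
    exact sdiff_eq_bot_iff.1 (mval_eq_zero.1 (h0.antisymm (mval_nonneg _)))
  have hpI : mval μ p = I :=
    (hI.2 (Set.forall_mem_image.2 fun x hx => mval_mono (hp.1 hx))).antisymm
      (tendsto_nhds_unique hu ht ▸ mval_mono (hp.2 ht_lb))
  exact hpI ▸ hI

end MeasureAlgebra

section ProbabilityMeasureAlgebra

variable {X : Type u} [MeasurableSpace X] {μ : Measure X} [IsProbabilityMeasure μ]

theorem mval_top : mval μ (⊤ : MAlg X μ) = 1 := by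
  rw [← TopHomClass.map_top (MAlg.mkHom μ), mval_mkHom]
  simp

theorem eq_top_of_one_le_mval {x : MAlg X μ} (h : 1 ≤ mval μ x) : x = ⊤ := by
  have h0 : mval μ (⊤ \ x) ≤ 0 := by
    rw [mval_sdiff, top_inf_eq, mval_top]
    linarith
  exact top_le_iff.1 (sdiff_eq_bot_iff.1 (mval_eq_zero.1 (h0.antisymm (mval_nonneg _))))

end ProbabilityMeasureAlgebra

instance (κ : Type u) : IsProbabilityMeasure (lam κ) :=
  ⟨Measure.addHaarMeasure_self⟩

theorem purely_atomic_name_maximal_antichain_general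
    {A : Type u} [BooleanAlgebra A] (κ : Type u)
    (V : ℕ → Set A) (hV : ∀ n, IsUltrafilterOn (V n)) (hVdist : Function.Injective V)
    (a : ℕ → ℝ) (ha : ∀ n, 0 < a n) (hsum : (∑' n : ℕ, a n) = 1)
    (φ : BoundedLatticeHom A (MAlg (Cube κ) (lam κ)))
    (hφ : ∀ x : A, mval (lam κ) (φ x) = ∑' n : ℕ, if x ∈ V n then a n else 0)
    (p : ℕ → MAlg (Cube κ) (lam κ))
    (hp : ∀ n, IsGLB (φ '' V n) (p n)) :
    (∀ m n : ℕ, m ≠ n → p m ⊓ p n = ⊥) ∧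
      (∀ n, a n ≤ mval (lam κ) (p n)) ∧
      IsLUB (Set.range p) ⊤ := by
  have hsummable : Summable a := by
    by_contra h
    simp [tsum_eq_zero_of_not_summable h] at hsum
  have hdisj : Pairwise fun m n => Disjoint (p m) (p n) := fun m n hmn =>
    (hV m).disjoint_of_mem_lowerBounds_image (hV n) (hVdist.ne hmn) φ (hp m).1 (hp n).1
  have hmeasure : ∀ n, a n ≤ mval (lam κ) (p n) := by
    intro n
    refine (MAlg.isGLB_mval_image ((hV n).nonempty.image φ)
      ((hV n).directedOn_image (OrderHomClass.mono φ)) (hp n)).2 ?_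
    rintro _ ⟨_, ⟨x, hx, rfl⟩, rfl⟩
    exact (hφ x).symm ▸ le_tsum_ite (fun m => (ha m).le) hsummable hx
  refine ⟨fun m n hmn => (hdisj hmn).eq_bot, hmeasure, fun _ _ => le_top, fun b hb => ?_⟩
  refine (eq_top_of_one_le_mval ?_).ge
  refine hsum ▸ Real.tsum_le_of_sum_range_le (fun n => (ha n).le) fun N => ?_
  exact (Finset.sum_le_sum fun n _ => hmeasure n).trans
    (sum_mval_le_of_pairwiseDisjoint _ (hdisj.set_pairwise _) fun n _ => hb ⟨n, rfl⟩)

/-- If the measure induced by `φ : A → M_κ` is purely atomic, `λ_κ ∘ φ = Σ_n a_n δ_{V_n}`,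
then the elements `p_n = inf φ[V_n]` form a maximal antichain in `M_κ` with
`λ_κ(p_n) ≥ a_n`. -/
theorem purely_atomic_name_maximal_antichain
    {A : Type u} [BooleanAlgebra A] (κ : Type u) [Infinite κ]
    (V : ℕ → Set A) (hV : ∀ n, IsUltrafilterOn (V n)) (hVdist : Function.Injective V)
    (a : ℕ → ℝ) (ha : ∀ n, 0 < a n) (hsum : (∑' n : ℕ, a n) = 1)
    (φ : BoundedLatticeHom A (MAlg (Cube κ) (lam κ)))
    (hφ : ∀ x : A, mval (lam κ) (φ x) = ∑' n : ℕ, if x ∈ V n then a n else 0)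
    (p : ℕ → MAlg (Cube κ) (lam κ))
    (hp : ∀ n, IsGLB (φ '' V n) (p n)) :
    (∀ m n : ℕ, m ≠ n → p m ⊓ p n = ⊥) ∧
      (∀ n, a n ≤ mval (lam κ) (p n)) ∧
      IsLUB (Set.range p) ⊤ :=
  purely_atomic_name_maximal_antichain_general κ V hV hVdist a ha hsum φ hφ p hp
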